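/- Let V be a real inner product space, p, q positive integers, J : V → V a symmetric linear map with J² = pJ + qI, and W = D₁ ⊕ D₂ a subspace admitting an orthogonal projection onto it, where D₁ and D₂ are mutually orthogonal subspaces. Suppose ⟨JX, Y⟩ = 0 for all X ∈ D₁ and Y ∈ D₂, and suppose there is θ ∈ [0, π/2] such that ‖TX‖ = cos θ·‖JX‖ for every X ∈ D₁ and for every X ∈ D₂ (i.e. D₁ and D₂ are slant with the same slant angle θ). Then W is slant with slant angle θ: ‖TX‖ = cos θ·‖JX‖ for every X ∈ W. -/

import Mathlib

open scoped RealInnerProductSpace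

/-- The tangential part of `J X` with respect to the subspace `W`:
`T X := P_W (J X)` (also used for `t U := P_W (J U)` when `U ∈ Wᗮ`). -/
noncomputable def tang {V : Type*} [NormedAddCommGroup V] [InnerProductSpace ℝ V]
    (W : Submodule ℝ V) [Submodule.HasOrthogonalProjection W] (J : V →ₗ[ℝ] V) (X : V) : V :=
  (W.orthogonalProjectionOnto (J X) : V)

/-- The normal part of `J X` with respect to the subspace `W`:
`N X := J X − T X` (also used for `n U := J U − t U` when `U ∈ Wᗮ`). -/
noncomputable def norm' {V : Type*} [NormedAddCommGroup V] [InnerProductSpace ℝ V]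
    (W : Submodule ℝ V) [Submodule.HasOrthogonalProjection W] (J : V →ₗ[ℝ] V) (X : V) : V :=
  J X - tang W J X

/-! Write `X = x₁ + x₂` with `xᵢ ∈ Dᵢ`. Since `J D₁ ⊥ D₂`, the tangential parts satisfy
`T xᵢ ∈ Dᵢ`; since `J` is symmetric and metallic, also `J x₁ ⊥ J x₂`. So `T X = T x₁ + T x₂` and
`J X = J x₁ + J x₂` are both orthogonal sums, and Pythagoras combines the two slant identities. -/

theorem Submodule.IsOrtho.sup_inf_orthogonal_eq {𝕜 E : Type*} [RCLike 𝕜] [NormedAddCommGroup E]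
    [InnerProductSpace 𝕜 E] {U V : Submodule 𝕜 E} (h : U ⟂ V) : (U ⊔ V) ⊓ Vᗮ = U := by
  rw [sup_inf_assoc_of_le _ (Submodule.isOrtho_iff_le.mp h), V.inf_orthogonal_eq_bot, sup_bot_eq]

theorem norm_add_eq_mul_norm_add_of_inner_eq_zero {F : Type*} [NormedAddCommGroup F]
    [InnerProductSpace ℝ F] {u₁ u₂ v₁ v₂ : F} {c : ℝ} (hc : 0 ≤ c)
    (hu : ⟪u₁, u₂⟫ = 0) (hv : ⟪v₁, v₂⟫ = 0) (h₁ : ‖u₁‖ = c * ‖v₁‖) (h₂ : ‖u₂‖ = c * ‖v₂‖) :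
    ‖u₁ + u₂‖ = c * ‖v₁ + v₂‖ := by
  refine (mul_self_inj (norm_nonneg _) (by positivity)).mp ?_
  calc ‖u₁ + u₂‖ * ‖u₁ + u₂‖ = ‖u₁‖ * ‖u₁‖ + ‖u₂‖ * ‖u₂‖ :=
        norm_add_sq_eq_norm_sq_add_norm_sq_real hu
    _ = c * c * (‖v₁‖ * ‖v₁‖ + ‖v₂‖ * ‖v₂‖) := by rw [h₁, h₂]; ring
    _ = c * ‖v₁ + v₂‖ * (c * ‖v₁ + v₂‖) := by
        rw [mul_mul_mul_comm, norm_add_sq_eq_norm_sq_add_norm_sq_real hv]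

section

variable {V : Type*} [NormedAddCommGroup V] [InnerProductSpace ℝ V]

theorem inner_map_map_eq_zero_of_metallic {J : V →ₗ[ℝ] V} {p q : ℝ}
    (hJsym : ∀ x y : V, ⟪J x, y⟫ = ⟪x, J y⟫) (hJ2 : ∀ v : V, J (J v) = p • J v + q • v)
    {x y : V} (hxy : ⟪x, y⟫ = 0) (hJxy : ⟪J x, y⟫ = 0) : ⟪J x, J y⟫ = 0 := by
  rw [← hJsym, hJ2, inner_add_left, real_inner_smul_left, real_inner_smul_left, hJxy, hxy]
  ring

variable (W : Submodule ℝ V) [W.HasOrthogonalProjection] (J : V →ₗ[ℝ] V)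

theorem tang_add (x y : V) : tang W J (x + y) = tang W J x + tang W J y := by
  simp only [tang, map_add, Submodule.coe_add]

theorem tang_mem (x : V) : tang W J x ∈ W :=
  (W.orthogonalProjectionOnto (J x)).2

theorem inner_tang_of_mem (x : V) {w : V} (hw : w ∈ W) : ⟪tang W J x, w⟫ = ⟪J x, w⟫ :=
  W.inner_orthogonalProjectionOnto_eq_of_mem_right ⟨w, hw⟩ (J x)

theorem tang_mem_orthogonal {D : Submodule ℝ V} (hD : D ≤ W) {x : V} (hx : J x ∈ Dᗮ) :
    tang W J x ∈ Dᗮ := fun y hy => by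
  rw [real_inner_comm, inner_tang_of_mem W J x (hD hy), real_inner_comm]
  exact hx y hy

theorem tang_mem_of_isOrtho {D₁ D₂ : Submodule ℝ V} (hD : D₁ ⟂ D₂) (hW : W = D₁ ⊔ D₂) {x : V}
    (hx : J x ∈ D₂ᗮ) : tang W J x ∈ D₁ := by
  rw [← hD.sup_inf_orthogonal_eq, ← hW]
  exact ⟨tang_mem W J x, tang_mem_orthogonal W J (hW ▸ le_sup_right) hx⟩

end

theorem bislant_equal_angles_is_slant_general {V : Type*} [NormedAddCommGroup V]
    [InnerProductSpace ℝ V]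
    (p q : ℕ)
    (J : V →ₗ[ℝ] V)
    (hJsym : ∀ x y : V, ⟪J x, y⟫ = ⟪x, J y⟫)
    (hJ2 : ∀ v : V, J (J v) = (p : ℝ) • J v + (q : ℝ) • v)
    (D₁ D₂ W : Submodule ℝ V) [Submodule.HasOrthogonalProjection W]
    (horth : ∀ x ∈ D₁, ∀ y ∈ D₂, ⟪x, y⟫ = 0)
    (hW : W = D₁ ⊔ D₂)
    (hJorth : ∀ X ∈ D₁, ∀ Y ∈ D₂, ⟪J X, Y⟫ = 0)
    (θ : ℝ) (hθ : θ ∈ Set.Icc 0 (Real.pi / 2))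
    (hslant₁ : ∀ X ∈ D₁, ‖tang W J X‖ = Real.cos θ * ‖J X‖)
    (hslant₂ : ∀ X ∈ D₂, ‖tang W J X‖ = Real.cos θ * ‖J X‖) :
    ∀ X ∈ W, ‖tang W J X‖ = Real.cos θ * ‖J X‖ := by
  have hD : D₁ ⟂ D₂ := Submodule.isOrtho_iff_inner_eq.mpr horth
  have hcos : 0 ≤ Real.cos θ :=
    Real.cos_nonneg_of_mem_Icc ⟨by linarith [hθ.1, Real.pi_pos], hθ.2⟩
  intro X hX
  obtain ⟨x₁, hx₁, x₂, hx₂, rfl⟩ := Submodule.mem_sup.mp (hW ▸ hX)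
  have hT₁ : tang W J x₁ ∈ D₁ :=
    tang_mem_of_isOrtho W J hD hW ((Submodule.mem_orthogonal' _ _).mpr (hJorth x₁ hx₁))
  have hT₂ : tang W J x₂ ∈ D₂ :=
    tang_mem_of_isOrtho W J hD.symm (hW.trans (sup_comm _ _)) fun y hy =>
      (hJsym y x₂).symm.trans (hJorth y hy x₂ hx₂)
  rw [tang_add, map_add]
  exact norm_add_eq_mul_norm_add_of_inner_eq_zero hcos (horth _ hT₁ _ hT₂)
    (inner_map_map_eq_zero_of_metallic hJsym hJ2 (horth x₁ hx₁ x₂ hx₂) (hJorth x₁ hx₁ x₂ hx₂))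
    (hslant₁ x₁ hx₁) (hslant₂ x₂ hx₂)

/-- If `W = D₁ ⊕ D₂` with `D₁ ⊥ D₂`, `⟨JX, Y⟩ = 0` for `X ∈ D₁`, `Y ∈ D₂`,
and both `D₁` and `D₂` are slant with the same slant angle `θ` with respect to a symmetric
metallic structure `J`, then `W` is slant with slant angle `θ`. -/
theorem bislant_equal_angles_is_slant {V : Type*} [NormedAddCommGroup V]
    [InnerProductSpace ℝ V]
    (p q : ℕ) (hp : 0 < p) (hq : 0 < q)
    (J : V →ₗ[ℝ] V)
    (hJsym : ∀ x y : V, ⟪J x, y⟫ = ⟪x, J y⟫)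
    (hJ2 : ∀ v : V, J (J v) = (p : ℝ) • J v + (q : ℝ) • v)
    (D₁ D₂ W : Submodule ℝ V) [Submodule.HasOrthogonalProjection W]
    (horth : ∀ x ∈ D₁, ∀ y ∈ D₂, ⟪x, y⟫ = 0)
    (hW : W = D₁ ⊔ D₂)
    (hJorth : ∀ X ∈ D₁, ∀ Y ∈ D₂, ⟪J X, Y⟫ = 0)
    (θ : ℝ) (hθ : θ ∈ Set.Icc 0 (Real.pi / 2))
    (hslant₁ : ∀ X ∈ D₁, ‖tang W J X‖ = Real.cos θ * ‖J X‖)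
    (hslant₂ : ∀ X ∈ D₂, ‖tang W J X‖ = Real.cos θ * ‖J X‖) :
    ∀ X ∈ W, ‖tang W J X‖ = Real.cos θ * ‖J X‖ :=
  bislant_equal_angles_is_slant_general p q J hJsym hJ2 D₁ D₂ W horth hW hJorth θ hθ hslant₁ hslant₂
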